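/- Suppose the symmetric 3-tensor T satisfies condition (Γ). Then the vector M ∈ ℝ^p with M_i = tr(T_i) satisfies ‖M‖ ≤ τ ‖Γ‖ tr(Γ²), where ‖Γ‖ is the spectral norm of Γ. -/

import Mathlib

open Matrix Finset

/-- Euclidean norm on `ℝ^p`. -/
noncomputable def euclNorm {p : ℕ} (v : Fin p → ℝ) : ℝ := Real.sqrt (∑ i, v i ^ 2)

/-- Spectral (ℓ²-operator) norm of a real `p×p` matrix. -/
noncomputable def specNorm {p : ℕ} (A : Matrix (Fin p) (Fin p) ℝ) : ℝ :=
  ‖Matrix.toEuclideanCLM (𝕜 := ℝ) A‖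

/-!
The key fact is a polarization inequality: if `|T(u,u,u)| ≤ τ ‖Γu‖³` for all `u`, then
`|T(u,u,v)| ≤ τ ‖Γu‖² ‖Γv‖`. Restricted to the plane spanned by `u` and `v` this is a
statement about a binary cubic bounded by `τ` on the unit circle of a Euclidean structure,
and there it follows from an exact three-point quadrature rule whose weights are
nonnegative and sum to one. Taking `u = e_j`, `v = M` and summing over `j` gives
`‖M‖² = ∑ⱼ T(e_j, e_j, M) ≤ τ ‖ΓM‖ ∑ⱼ ‖Γe_j‖² = τ ‖ΓM‖ tr(Γ²) ≤ τ ‖Γ‖ ‖M‖ tr(Γ²)`.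
-/

theorem euclNorm_sq {p : ℕ} (v : Fin p → ℝ) : euclNorm v ^ 2 = ∑ i, v i ^ 2 :=
  Real.sq_sqrt (by positivity)

theorem euclNorm_eq_norm_toLp {p : ℕ} (v : Fin p → ℝ) :
    euclNorm v = ‖(WithLp.toLp 2 v : EuclideanSpace ℝ (Fin p))‖ := by
  simp [euclNorm, EuclideanSpace.norm_eq]

theorem euclNorm_mulVec_le {p : ℕ} (A : Matrix (Fin p) (Fin p) ℝ) (v : Fin p → ℝ) :
    euclNorm (A *ᵥ v) ≤ specNorm A * euclNorm v := by
  rw [euclNorm_eq_norm_toLp, euclNorm_eq_norm_toLp, ← toEuclideanCLM_toLp]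
  exact ContinuousLinearMap.le_opNorm _ _

theorem sum_euclNorm_mulVec_single_sq {p : ℕ} {Γ : Matrix (Fin p) (Fin p) ℝ} (hΓ : Γ.IsSymm) :
    ∑ j, euclNorm (Γ *ᵥ Pi.single j 1) ^ 2 = (Γ ^ 2).trace := by
  simp only [euclNorm_sq, mulVec_single_one, col_apply, sq Γ, trace, diag_apply, mul_apply]
  rw [sum_comm]
  refine sum_congr rfl fun i _ => sum_congr rfl fun j _ => ?_
  rw [hΓ.apply i j, sq]

/-- The coefficients are binomially weighted, so that for a symmetric trilinear `T` restricted to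
a plane, `B₁ = T(e₁, e₁, e₂)` (see `trilin_smul_add_smul`). -/
def binCubic (B₀ B₁ B₂ B₃ x y : ℝ) : ℝ :=
  B₀ * x ^ 3 + 3 * B₁ * x ^ 2 * y + 3 * B₂ * x * y ^ 2 + B₃ * y ^ 3

/-- With `s = √3`, the three points are `(x, y)` rotated by `0`, `2π/3` and `4π/3`; on the unit
circle the weight of the point `(cos θ, sin θ)` is `(1 + 2 cos 2θ)²`. -/
theorem binCubic_quadrature (B₀ B₁ B₂ B₃ x y s : ℝ) (hs : s ^ 2 = 3) :
    (3 * x ^ 2 - y ^ 2) ^ 2 * binCubic B₀ B₁ B₂ B₃ x y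
      + (3 * (-(x + s * y) / 2) ^ 2 - ((s * x - y) / 2) ^ 2) ^ 2
          * binCubic B₀ B₁ B₂ B₃ (-(x + s * y) / 2) ((s * x - y) / 2)
      + (3 * ((s * y - x) / 2) ^ 2 - (-(s * x + y) / 2) ^ 2) ^ 2
          * binCubic B₀ B₁ B₂ B₃ ((s * y - x) / 2) (-(s * x + y) / 2)
      = 9 * (x ^ 2 + y ^ 2) ^ 2
          * ((x ^ 3 - 3 * x * y ^ 2) * B₀ + (3 * x ^ 2 * y - y ^ 3) * B₁) := by
  have hs4 : s ^ 4 = 9 := by rw [show s ^ 4 = (s ^ 2) ^ 2 by ring, hs]; norm_num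
  have hs6 : s ^ 6 = 27 := by rw [show s ^ 6 = (s ^ 2) ^ 3 by ring, hs]; norm_num
  unfold binCubic
  ring_nf
  simp only [hs, hs4, hs6]
  ring

theorem abs_cos_three_mul_add_sin_three_mul_le {B₀ B₁ B₂ B₃ τ : ℝ}
    (h : ∀ x y, x ^ 2 + y ^ 2 = 1 → |binCubic B₀ B₁ B₂ B₃ x y| ≤ τ) (ψ : ℝ) :
    |Real.cos (3 * ψ) * B₀ + Real.sin (3 * ψ) * B₁| ≤ τ := by
  have hxy := Real.cos_sq_add_sin_sq ψ
  rw [Real.cos_three_mul, Real.sin_three_mul]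
  generalize Real.cos ψ = x, Real.sin ψ = y at hxy ⊢
  obtain ⟨s, hs⟩ : ∃ s : ℝ, s ^ 2 = 3 := ⟨√3, Real.sq_sqrt (by norm_num)⟩
  have h₀ := h x y hxy
  have h₁ := h (-(x + s * y) / 2) ((s * x - y) / 2)
    (by linear_combination (1 + s ^ 2) / 4 * hxy + 1 / 4 * hs)
  have h₂ := h ((s * y - x) / 2) (-(s * x + y) / 2)
    (by linear_combination (1 + s ^ 2) / 4 * hxy + 1 / 4 * hs)
  have hq := binCubic_quadrature B₀ B₁ B₂ B₃ x y s hs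
  have hw : (3 * x ^ 2 - y ^ 2) ^ 2 + (3 * (-(x + s * y) / 2) ^ 2 - ((s * x - y) / 2) ^ 2) ^ 2
      + (3 * ((s * y - x) / 2) ^ 2 - (-(s * x + y) / 2) ^ 2) ^ 2 = 9 * (x ^ 2 + y ^ 2) ^ 2 := by
    have hs4 : s ^ 4 = 9 := by rw [show s ^ 4 = (s ^ 2) ^ 2 by ring, hs]; norm_num
    ring_nf
    simp only [hs, hs4]
    ring
  rw [hxy, one_pow, mul_one] at hq hw
  have h9 : |9 * ((x ^ 3 - 3 * x * y ^ 2) * B₀ + (3 * x ^ 2 * y - y ^ 3) * B₁)| ≤ 9 * τ := by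
    rw [← hq, ← hw]
    refine (abs_add_three _ _ _).trans ?_
    simp only [abs_mul, abs_sq, add_mul]
    gcongr
  rw [abs_mul, abs_of_pos (by norm_num : (0 : ℝ) < 9)] at h9
  rw [show 4 * x ^ 3 - 3 * x = x ^ 3 - 3 * x * y ^ 2 by linear_combination 3 * x * hxy,
    show 3 * y - 4 * y ^ 3 = 3 * x ^ 2 * y - y ^ 3 by linear_combination -3 * y * hxy]
  linarith

theorem abs_mul_add_mul_le_of_binCubic_le {B₀ B₁ B₂ B₃ τ : ℝ}
    (h : ∀ x y, x ^ 2 + y ^ 2 = 1 → |binCubic B₀ B₁ B₂ B₃ x y| ≤ τ) (u v : ℝ) :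
    |u * B₀ + v * B₁| ≤ τ * √(u ^ 2 + v ^ 2) := by
  let z : ℂ := ⟨u, v⟩
  have hu : u = ‖z‖ * Real.cos (Complex.arg z) := (Complex.norm_mul_cos_arg z).symm
  have hv : v = ‖z‖ * Real.sin (Complex.arg z) := (Complex.norm_mul_sin_arg z).symm
  have hψ := abs_cos_three_mul_add_sin_three_mul_le h (Complex.arg z / 3)
  rw [mul_div_cancel₀ _ three_ne_zero] at hψ
  calc |u * B₀ + v * B₁|
      = |‖z‖ * (Real.cos (Complex.arg z) * B₀ + Real.sin (Complex.arg z) * B₁)| := by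
        rw [hu, hv]; ring_nf
    _ = ‖z‖ * |Real.cos (Complex.arg z) * B₀ + Real.sin (Complex.arg z) * B₁| := by
        rw [abs_mul, abs_norm]
    _ ≤ ‖z‖ * τ := by gcongr
    _ = τ * √(u ^ 2 + v ^ 2) := by rw [Complex.norm_eq_sqrt_sq_add_sq, mul_comm]

theorem binCubic_triangular_subst (A₀ A₁ A₂ A₃ p q t X Y : ℝ) :
    binCubic A₀ A₁ A₂ A₃ (p * X + q * Y) (t * Y)
      = binCubic (A₀ * p ^ 3) (A₀ * p ^ 2 * q + A₁ * p ^ 2 * t)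
          (A₀ * p * q ^ 2 + 2 * A₁ * p * q * t + A₂ * p * t ^ 2)
          (A₀ * q ^ 3 + 3 * A₁ * q ^ 2 * t + 3 * A₂ * q * t ^ 2 + A₃ * t ^ 3) X Y := by
  unfold binCubic
  ring

theorem abs_coeff_le_of_binCubic_le_sq_add_sq {A₀ A₁ A₂ A₃ τ a b c : ℝ} (ha : 0 < a) (hc : 0 < c)
    (h : ∀ α β, |binCubic A₀ A₁ A₂ A₃ α β| ≤ τ * √((a * α + b * β) ^ 2 + (c * β) ^ 2) ^ 3) :
    |A₁| ≤ τ * a ^ 2 * √(b ^ 2 + c ^ 2) := by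
  have hunit : ∀ X Y : ℝ, X ^ 2 + Y ^ 2 = 1 →
      |binCubic A₀ A₁ A₂ A₃ (a⁻¹ * X + (-b / (a * c)) * Y) (c⁻¹ * Y)| ≤ τ := by
    intro X Y hXY
    have hQ : (a * (a⁻¹ * X + -b / (a * c) * Y) + b * (c⁻¹ * Y)) ^ 2 + (c * (c⁻¹ * Y)) ^ 2
        = X ^ 2 + Y ^ 2 := by
      field_simp; ring
    simpa [hQ, hXY] using h (a⁻¹ * X + (-b / (a * c)) * Y) (c⁻¹ * Y)
  simp only [binCubic_triangular_subst] at hunit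
  have key := abs_mul_add_mul_le_of_binCubic_le hunit b c
  have hA₁ : A₁ = a ^ 2 * (b * (A₀ * a⁻¹ ^ 3) + c * (A₀ * a⁻¹ ^ 2 * (-b / (a * c))
      + A₁ * a⁻¹ ^ 2 * c⁻¹)) := by
    field_simp; ring
  rw [hA₁, abs_mul, abs_of_nonneg (sq_nonneg a)]
  nlinarith [sq_nonneg a]

open Filter Topology in
theorem abs_coeff_le_of_binCubic_le_norm {E : Type*} [NormedAddCommGroup E] [InnerProductSpace ℝ E]
    {A₀ A₁ A₂ A₃ τ : ℝ} (hτ : 0 ≤ τ) (X Y : E)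
    (h : ∀ α β : ℝ, |binCubic A₀ A₁ A₂ A₃ α β| ≤ τ * ‖α • X + β • Y‖ ^ 3) :
    |A₁| ≤ τ * ‖X‖ ^ 2 * ‖Y‖ := by
  -- The Gram form of `X, Y` may be degenerate; `ε (α² + β²)` makes it definite, and `ε → 0`.
  set G := inner ℝ X Y
  have hG : G ^ 2 ≤ ‖X‖ ^ 2 * ‖Y‖ ^ 2 := by
    rw [← mul_pow, sq_le_sq, abs_mul, abs_norm, abs_norm]
    exact abs_real_inner_le_norm X Y
  have hnorm : ∀ α β : ℝ,
      ‖α • X + β • Y‖ ^ 2 = α ^ 2 * ‖X‖ ^ 2 + 2 * α * β * G + β ^ 2 * ‖Y‖ ^ 2 := by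
    intro α β
    rw [norm_add_sq_real, norm_smul, norm_smul, real_inner_smul_left, real_inner_smul_right,
      mul_pow, mul_pow, Real.norm_eq_abs, Real.norm_eq_abs, sq_abs, sq_abs]
    ring
  have hε : ∀ ε > 0, |A₁| ≤ τ * (‖X‖ ^ 2 + ε) * √(‖Y‖ ^ 2 + ε) := by
    intro ε hε
    set a := √(‖X‖ ^ 2 + ε)
    have ha : 0 < a := Real.sqrt_pos.2 (by positivity)
    have ha2 : a ^ 2 = ‖X‖ ^ 2 + ε := Real.sq_sqrt (by positivity)
    have hD : 0 < a ^ 2 * (‖Y‖ ^ 2 + ε) - G ^ 2 := by nlinarith [sq_nonneg ‖X‖, sq_nonneg ‖Y‖]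
    set c := √(a ^ 2 * (‖Y‖ ^ 2 + ε) - G ^ 2) / a
    have hc : 0 < c := div_pos (Real.sqrt_pos.2 hD) ha
    have hbc : (G / a) ^ 2 + c ^ 2 = ‖Y‖ ^ 2 + ε := by
      rw [div_pow, div_pow, Real.sq_sqrt hD.le]; field_simp; ring
    have hQ : ∀ α β : ℝ, ‖α • X + β • Y‖ ^ 2 ≤ (a * α + G / a * β) ^ 2 + (c * β) ^ 2 := by
      intro α β
      have : (a * α + G / a * β) ^ 2 + (c * β) ^ 2
          = a ^ 2 * α ^ 2 + 2 * α * β * G + ((G / a) ^ 2 + c ^ 2) * β ^ 2 := by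
        field_simp; ring
      rw [this, hbc, ha2, hnorm]
      nlinarith [sq_nonneg α, sq_nonneg β]
    have := abs_coeff_le_of_binCubic_le_sq_add_sq ha hc (b := G / a) fun α β =>
      (h α β).trans (by
        gcongr
        exact Real.le_sqrt_of_sq_le (hQ α β))
    rwa [ha2, hbc] at this
  have hlim : Tendsto (fun ε => τ * (‖X‖ ^ 2 + ε) * √(‖Y‖ ^ 2 + ε)) (𝓝[>] 0)
      (𝓝 (τ * ‖X‖ ^ 2 * ‖Y‖)) := by
    have : Continuous fun ε => τ * (‖X‖ ^ 2 + ε) * √(‖Y‖ ^ 2 + ε) := by fun_prop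
    simpa [Real.sqrt_sq (norm_nonneg Y)] using (this.tendsto 0).mono_left nhdsWithin_le_nhds
  exact ge_of_tendsto hlim (eventually_nhdsWithin_of_forall hε)

section Trilinear

variable {p : ℕ} {T : Fin p → Fin p → Fin p → ℝ}

def trilin (T : Fin p → Fin p → Fin p → ℝ) (u v w : Fin p → ℝ) : ℝ :=
  ∑ i, ∑ j, ∑ k, T i j k * u i * v j * w k

theorem trilin_comm₁₂ (h : ∀ i j k, T i j k = T j i k) (u v w : Fin p → ℝ) :
    trilin T u v w = trilin T v u w := by
  unfold trilin
  rw [sum_comm]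
  refine sum_congr rfl fun i _ => sum_congr rfl fun j _ => sum_congr rfl fun k _ => ?_
  rw [h j i k]; ring

theorem trilin_comm₂₃ (h : ∀ i j k, T i j k = T i k j) (u v w : Fin p → ℝ) :
    trilin T u v w = trilin T u w v := by
  unfold trilin
  refine sum_congr rfl fun i _ => ?_
  rw [sum_comm]
  refine sum_congr rfl fun j _ => sum_congr rfl fun k _ => ?_
  rw [h i k j]; ring

theorem trilin_smul_add_smul (hsym : ∀ i j k, T i j k = T j i k ∧ T i j k = T i k j)
    (u v : Fin p → ℝ) (α β : ℝ) :
    trilin T (α • u + β • v) (α • u + β • v) (α • u + β • v)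
      = binCubic (trilin T u u u) (trilin T u u v) (trilin T u v v) (trilin T v v v) α β := by
  have h₁₂ := trilin_comm₁₂ fun i j k => (hsym i j k).1
  have h₂₃ := trilin_comm₂₃ fun i j k => (hsym i j k).2
  have expand : trilin T (α • u + β • v) (α • u + β • v) (α • u + β • v)
      = α ^ 3 * trilin T u u u + α ^ 2 * β * (trilin T u u v + trilin T u v u + trilin T v u u)
        + α * β ^ 2 * (trilin T u v v + trilin T v u v + trilin T v v u)
        + β ^ 3 * trilin T v v v := by
    simp only [trilin, Pi.add_apply, Pi.smul_apply, smul_eq_mul, mul_add, add_mul, mul_sum,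
      ← sum_add_distrib]
    refine sum_congr rfl fun i _ => sum_congr rfl fun j _ => sum_congr rfl fun k _ => ?_
    ring
  rw [expand, h₂₃ u v u, h₁₂ v u u, h₂₃ u v u, h₁₂ v u v, h₂₃ v v u, h₁₂ v u v]
  unfold binCubic
  ring

theorem abs_trilin_le_of_cube_le (hsym : ∀ i j k, T i j k = T j i k ∧ T i j k = T i k j)
    {m : ℕ} {Γ : Matrix (Fin m) (Fin p) ℝ} {τ : ℝ} (hτ : 0 ≤ τ)
    (hT : ∀ u, |trilin T u u u| ≤ τ * euclNorm (Γ *ᵥ u) ^ 3) (u v : Fin p → ℝ) :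
    |trilin T u u v| ≤ τ * euclNorm (Γ *ᵥ u) ^ 2 * euclNorm (Γ *ᵥ v) := by
  simp only [euclNorm_eq_norm_toLp] at hT ⊢
  refine abs_coeff_le_of_binCubic_le_norm (A₀ := trilin T u u u) (A₂ := trilin T u v v)
    (A₃ := trilin T v v v) hτ _ _ fun α β => ?_
  rw [← trilin_smul_add_smul hsym]
  simpa [mulVec_add, mulVec_smul] using hT (α • u + β • v)

theorem trilin_single_single (j : Fin p) (w : Fin p → ℝ) :
    trilin T (Pi.single j 1) (Pi.single j 1) w = ∑ k, T j j k * w k := by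
  simp [trilin, Pi.single_apply]

theorem sum_trilin_single_single (hsym : ∀ i j k, T i j k = T j i k ∧ T i j k = T i k j)
    (w : Fin p → ℝ) :
    ∑ j, trilin T (Pi.single j 1) (Pi.single j 1) w = ∑ k, (∑ j, T k j j) * w k := by
  simp only [trilin_single_single, sum_mul]
  rw [sum_comm]
  refine sum_congr rfl fun k _ => sum_congr rfl fun j _ => ?_
  rw [(hsym j j k).2, (hsym j k j).1]

end Trilinear

/-- If the symmetric 3-tensor `T` satisfies condition (Γ), then the vector
`M` with `M i = tr(T_i) = ∑ j, T i j j` satisfies `‖M‖ ≤ τ ‖Γ‖ tr(Γ²)`,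
with `‖Γ‖` the spectral norm. -/
theorem tensor_trace_vector_bound
    (p : ℕ) (T : Fin p → Fin p → Fin p → ℝ)
    (hsym : ∀ i j k, T i j k = T j i k ∧ T i j k = T i k j)
    (Γ : Matrix (Fin p) (Fin p) ℝ) (hΓ : Γ.IsSymm) (τ : ℝ) (hτ : 0 < τ)
    (hT : ∀ u : Fin p → ℝ,
      |∑ i, ∑ j, ∑ k, T i j k * u i * u j * u k| ≤ τ * euclNorm (Γ.mulVec u) ^ 3) :
    euclNorm (fun i => ∑ j, T i j j) ≤ τ * specNorm Γ * (Γ ^ 2).trace := by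
  set M : Fin p → ℝ := fun i => ∑ j, T i j j
  have htrace : 0 ≤ (Γ ^ 2).trace := sum_euclNorm_mulVec_single_sq hΓ ▸ by positivity
  have hK : 0 ≤ τ * specNorm Γ * (Γ ^ 2).trace :=
    mul_nonneg (mul_nonneg hτ.le (norm_nonneg _)) htrace
  have hM : euclNorm M ^ 2 ≤ τ * specNorm Γ * (Γ ^ 2).trace * euclNorm M :=
    calc euclNorm M ^ 2 = ∑ j, trilin T (Pi.single j 1) (Pi.single j 1) M := by
          rw [sum_trilin_single_single hsym, euclNorm_sq]; simp only [M, sq]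
      _ ≤ ∑ j, τ * euclNorm (Γ *ᵥ Pi.single j 1) ^ 2 * euclNorm (Γ *ᵥ M) :=
          sum_le_sum fun j _ => (le_abs_self _).trans (abs_trilin_le_of_cube_le hsym hτ.le hT _ _)
      _ = τ * euclNorm (Γ *ᵥ M) * (Γ ^ 2).trace := by
          rw [← sum_euclNorm_mulVec_single_sq hΓ, mul_sum]
          exact sum_congr rfl fun j _ => by ring
      _ ≤ τ * (specNorm Γ * euclNorm M) * (Γ ^ 2).trace := by
          gcongr; exact euclNorm_mulVec_le Γ M
      _ = τ * specNorm Γ * (Γ ^ 2).trace * euclNorm M := by ring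
  nlinarith [show 0 ≤ euclNorm M from Real.sqrt_nonneg _]
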